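/- arXiv:1604.06828 — 3 statements merged into one kernel-verified Lean document; each statement's English description precedes it below -/
import Mathlib

section
/- Let $f : [0,1]^n \to \mathbb{R}$ be defined by $f(x) = \frac{1}{n}\sum_{1 \leq i < j \leq n} x_i x_j$. Then for every $i$, $\partial f / \partial x_i = \frac{1}{n}\sum_{j \neq i} x_j = -x_i/n + \frac{1}{n}\sum_{j=1}^n x_j$, and for every $x \in [0,1]^n$, letting $k = \lfloor \sum_{j=1}^n x_j \rfloor$ and $z = (k/n, \ldots, k/n) \in \mathbb{R}^n$, the Euclidean distance $\|\nabla f(x) - z\|$ is at most $2 n^{-1/2}$. -/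
open Real Finset

lemma aux_sqrt_bound (n : ℕ) (hn0 : (0:ℝ) < n) (g : Fin n → ℝ)
    (h : ∀ i, g i ^ 2 ≤ 1 / (n:ℝ) ^ 2) :
    Real.sqrt (∑ i, g i ^ 2) ≤ 2 / Real.sqrt n := by
  have hsum : (∑ i : Fin n, g i ^ 2) ≤ 4 / n := by
    calc (∑ i : Fin n, g i ^ 2)
        ≤ ∑ _i : Fin n, 1 / (n:ℝ) ^ 2 := Finset.sum_le_sum (fun i _ => h i)
      _ = n * (1 / (n:ℝ) ^ 2) := by rw [Finset.sum_const, Finset.card_univ, Fintype.card_fin,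
          nsmul_eq_mul]
      _ = 1 / n := by field_simp
      _ ≤ 4 / n := by gcongr <;> norm_num
  calc Real.sqrt (∑ i, g i ^ 2) ≤ Real.sqrt (4 / n) := Real.sqrt_le_sqrt hsum
    _ = 2 / Real.sqrt n := by
        rw [Real.sqrt_div (by norm_num : (0:ℝ) ≤ 4),
          show (4:ℝ) = 2 ^ 2 by norm_num, Real.sqrt_sq (by norm_num : (0:ℝ) ≤ 2)]

theorem stmt_6 (n : ℕ) (hn : 1 ≤ n) (x : Fin n → ℝ)
    (hx : ∀ i, x i ∈ Set.Icc (0 : ℝ) 1) :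
    let f : (Fin n → ℝ) → ℝ := fun y => (1 / n) * ∑ i, ∑ j, if i < j then y i * y j else 0
    (∀ i, fderiv ℝ f x (Pi.single i 1) = (1 / n) * ∑ j ∈ Finset.univ.erase i, x j ∧
      fderiv ℝ f x (Pi.single i 1) = -(x i) / n + (1 / n) * ∑ j, x j) ∧
    Real.sqrt (∑ i, (fderiv ℝ f x (Pi.single i 1) - ((⌊∑ j, x j⌋ : ℤ) : ℝ) / n) ^ 2)
      ≤ 2 / Real.sqrt n := by
  intro f
  have hn0 : (0:ℝ) < n := by exact_mod_cast hn
  set L : (Fin n → ℝ) →L[ℝ] ℝ :=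
    ∑ a : Fin n, ∑ b : Fin n,
      if a < b then (x a • (ContinuousLinearMap.proj b : (Fin n → ℝ) →L[ℝ] ℝ)
        + x b • ContinuousLinearMap.proj a) else 0 with hLdef
  have h1 : ∀ a b : Fin n, HasFDerivAt (fun y : Fin n → ℝ => if a < b then y a * y b else 0)
      (if a < b then (x a • (ContinuousLinearMap.proj b : (Fin n → ℝ) →L[ℝ] ℝ)
        + x b • ContinuousLinearMap.proj a) else 0) x := by
    intro a b
    by_cases h : a < b
    · simp only [if_pos h]
      exact (hasFDerivAt_apply a x).mul (hasFDerivAt_apply b x)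
    · simp only [if_neg h]
      exact hasFDerivAt_const 0 x
  have h2 : HasFDerivAt f ((1 / (n:ℝ)) • L) x := by
    have := HasFDerivAt.sum (fun a (_ : a ∈ Finset.univ) =>
      HasFDerivAt.sum (fun b (_ : b ∈ Finset.univ) => h1 a b))
    have h := this.const_mul (1 / (n:ℝ))
    simp only [Finset.sum_apply] at h
    exact h
  have h3 : ∀ i, fderiv ℝ f x (Pi.single i 1) = (1 / n) * (L (Pi.single i 1)) := by
    intro i; rw [h2.fderiv]; simp
  have h4 : ∀ i, L (Pi.single i 1) = ∑ j ∈ Finset.univ.erase i, x j := by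
    intro i
    rw [hLdef]
    simp only [ContinuousLinearMap.coe_sum', Finset.sum_apply]
    have key : ∀ a b : Fin n,
        ((if a < b then (x a • (ContinuousLinearMap.proj b : (Fin n → ℝ) →L[ℝ] ℝ)
          + x b • ContinuousLinearMap.proj a) else 0 : (Fin n → ℝ) →L[ℝ] ℝ) (Pi.single i 1))
        = (if a < b then (if b = i then x a else 0) else 0)
          + (if a < b then (if a = i then x b else 0) else 0) := by
      intro a b
      rw [apply_ite (fun F : (Fin n → ℝ) →L[ℝ] ℝ => F (Pi.single i 1))]
      simp [Pi.single_apply]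
      split_ifs <;> simp
    simp_rw [key, Finset.sum_add_distrib]
    have s1 : ∀ a : Fin n, (∑ b : Fin n, if a < b then (if b = i then x a else 0) else 0)
        = if a < i then x a else 0 := by
      intro a
      rw [Finset.sum_eq_single i]
      · simp
      · intro b _ hb; simp [hb]
      · simp
    have s2 : ∀ a : Fin n, (∑ b : Fin n, if a < b then (if a = i then x b else 0) else 0)
        = if a = i then (∑ b : Fin n, if i < b then x b else 0) else 0 := by
      intro a
      by_cases ha : a = i
      · subst ha; simp
      · simp [ha]
    simp_rw [s1, s2]
    rw [Finset.sum_ite_eq' Finset.univ i, if_pos (Finset.mem_univ i)]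
    have : ∑ j ∈ Finset.univ.erase i, x j = ∑ j : Fin n, if j ≠ i then x j else 0 := by
      rw [Finset.sum_ite, Finset.sum_const_zero, add_zero, Finset.filter_ne']
    rw [this, ← Finset.sum_add_distrib]
    apply Finset.sum_congr rfl
    intro j _
    rcases lt_trichotomy j i with h | h | h
    · simp [h, h.ne, not_lt.mpr h.le]
    · simp [h]
    · simp [h, h.ne', not_lt.mpr h.le]
  have hA : ∀ i, fderiv ℝ f x (Pi.single i 1) = (1 / n) * ∑ j ∈ Finset.univ.erase i, x j := by
    intro i; rw [h3 i, h4 i]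
  have hB : ∀ i, fderiv ℝ f x (Pi.single i 1) = -(x i) / n + (1 / n) * ∑ j, x j := by
    intro i
    rw [hA i, Finset.sum_erase_eq_sub (Finset.mem_univ i)]
    field_simp
    ring
  refine ⟨fun i => ⟨hA i, hB i⟩, ?_⟩
  set s : ℝ := ∑ j, x j with hs
  set k : ℤ := ⌊s⌋ with hk
  have hfrac0 : (0:ℝ) ≤ s - k := by
    have := Int.fract_nonneg s
    rwa [Int.fract] at this
  have hfrac1 : s - k < 1 := by
    have := Int.fract_lt_one s
    rwa [Int.fract] at this
  have hterm : ∀ i : Fin n, (fderiv ℝ f x (Pi.single i 1) - (k : ℝ) / n) ^ 2 ≤ 1 / (n:ℝ) ^ 2 := by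
    intro i
    rw [hB i]
    have heq : -(x i) / n + (1 / n) * s - (k:ℝ) / n = (s - k - x i) / n := by
      field_simp; ring
    rw [heq, div_pow]
    have hnum : (s - k - x i) ^ 2 ≤ 1 := by
      have h1 : s - k - x i ≤ 1 := by
        have := (hx i).1; nlinarith
      have h2 : -1 ≤ s - k - x i := by
        have := (hx i).2; nlinarith
      nlinarith
    gcongr
  exact aux_sqrt_bound n hn0 _ hterm
end

section
/- With $f(x) = \frac{1}{m}\sum_{i,j,k=1}^m x_{ij}x_{jk}x_{ki}$ as above, there exists a universal constant $C$ such that for all $x, y \in [0,1]^{\binom{m}{2}}$, $\|\nabla f(x) - \nabla f(y)\|^2 \leq C m \|M(x) - M(y)\|_{\mathrm{op}}$, where $M(x)$ is the symmetric $m \times m$ matrix with $(i,j)$ entry $x_{ij}$ (and zero diagonal), and $\|\cdot\|_{\mathrm{op}}$ is the $\ell^2$ operator norm. -/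
open Real Finset Matrix

/-- The symmetric matrix with zero diagonal built from variables indexed by pairs `i < j`. -/
def symMat {m : ℕ} (x : {p : Fin m × Fin m // p.1 < p.2} → ℝ) : Matrix (Fin m) (Fin m) ℝ :=
  fun i j =>
    if h : i < j then x ⟨(i, j), h⟩
    else if h' : j < i then x ⟨(j, i), h'⟩
    else 0

namespace SGaux

variable {m : ℕ}

abbrev E (m : ℕ) := {p : Fin m × Fin m // p.1 < p.2} → ℝ

lemma symMat_comm (x : E m) (i j : Fin m) : symMat x i j = symMat x j i := by
  unfold symMat
  rcases lt_trichotomy i j with h | h | h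
  · rw [dif_pos h, dif_neg (asymm h), dif_pos h]
  · subst h; simp
  · rw [dif_neg (asymm h), dif_pos h, dif_pos h]

lemma symMat_mem (x : E m) (hx : ∀ e, x e ∈ Set.Icc (0 : ℝ) 1) (i j : Fin m) :
    symMat x i j ∈ Set.Icc (0 : ℝ) 1 := by
  unfold symMat
  split_ifs
  · exact hx _
  · exact hx _
  · simp [Set.mem_Icc]

def symCLM (i j : Fin m) : E m →L[ℝ] ℝ :=
  if h : i < j then ContinuousLinearMap.proj ⟨(i, j), h⟩
  else if h' : j < i then ContinuousLinearMap.proj ⟨(j, i), h'⟩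
  else 0

lemma symCLM_apply (i j : Fin m) (v : E m) : symCLM i j v = symMat v i j := by
  unfold symCLM symMat
  split_ifs <;> rfl

lemma hasFDerivAt_symMat (i j : Fin m) (x : E m) :
    HasFDerivAt (fun x : E m => symMat x i j) (symCLM i j) x := by
  have h : (fun x : E m => symMat x i j) = fun x => symCLM i j x := by
    funext v; rw [symCLM_apply]
  rw [h]
  exact (symCLM i j).hasFDerivAt

lemma symMat_single {p q : Fin m} (hpq : p < q) (i j : Fin m) :
    symMat (Pi.single (⟨(p, q), hpq⟩ : {p : Fin m × Fin m // p.1 < p.2}) 1) i j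
      = (if i = p ∧ j = q then (1:ℝ) else 0) + (if i = q ∧ j = p then 1 else 0) := by
  unfold symMat
  rcases lt_trichotomy i j with h | h | h
  · rw [dif_pos h, Pi.single_apply]
    have h2 : ¬(i = q ∧ j = p) := by
      rintro ⟨rfl, rfl⟩; exact absurd (h.trans hpq) (lt_irrefl _)
    rw [if_neg h2, add_zero]
    congr 1
    simp [Subtype.ext_iff, Prod.ext_iff]
  · subst h
    have h1 : ¬(i = p ∧ i = q) := by rintro ⟨rfl, rfl⟩; exact absurd hpq (lt_irrefl _)
    have h2 : ¬(i = q ∧ i = p) := by rintro ⟨rfl, rfl⟩; exact absurd hpq (lt_irrefl _)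
    simp [h1, h2]
  · rw [dif_neg (asymm h), dif_pos h, Pi.single_apply]
    have h1 : ¬(i = p ∧ j = q) := by
      rintro ⟨rfl, rfl⟩; exact absurd (h.trans hpq) (lt_irrefl _)
    rw [if_neg h1, zero_add]
    congr 1
    simp [Subtype.ext_iff, Prod.ext_iff, and_comm]

lemma sum2_ite (p q : Fin m) (c : Fin m → Fin m → ℝ) :
    ∑ i, ∑ j, (if i = p ∧ j = q then (1:ℝ) else 0) * c i j = c p q := by
  rw [Finset.sum_eq_single p]
  · rw [Finset.sum_eq_single q]
    · simp
    · intro b _ hb; simp [hb]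
    · simp
  · intro b _ hb; simp [hb]
  · simp

lemma delta_sum (e : {p : Fin m × Fin m // p.1 < p.2}) (c : Fin m → Fin m → ℝ) :
    ∑ i, ∑ j, symMat (Pi.single e 1) i j * c i j = c e.1.1 e.1.2 + c e.1.2 e.1.1 := by
  obtain ⟨⟨p, q⟩, hpq⟩ := e
  simp only [symMat_single hpq, add_mul, Finset.sum_add_distrib]
  rw [sum2_ite, sum2_ite]

lemma hasFDerivAt_f (x : E m) :
    HasFDerivAt (fun x : E m => (1 / (m:ℝ)) * ∑ i, ∑ j, ∑ k, symMat x i j * symMat x j k * symMat x k i)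
      ((1 / (m:ℝ)) • ∑ i, ∑ j, ∑ k,
        ((symMat x i j * symMat x j k) • symCLM k i +
          symMat x k i • (symMat x i j • symCLM j k + symMat x j k • symCLM i j))) x := by
  have h : HasFDerivAt (fun x : E m => ∑ i, ∑ j, ∑ k, symMat x i j * symMat x j k * symMat x k i)
      (∑ i, ∑ j, ∑ k,
        ((symMat x i j * symMat x j k) • symCLM k i +
          symMat x k i • (symMat x i j • symCLM j k + symMat x j k • symCLM i j))) x := by
    refine HasFDerivAt.fun_sum fun i _ => HasFDerivAt.fun_sum fun j _ => HasFDerivAt.fun_sum fun k _ => ?_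
    exact ((hasFDerivAt_symMat i j x).mul (hasFDerivAt_symMat j k x)).mul (hasFDerivAt_symMat k i x)
  exact h.const_mul _

lemma sum_rot (g : Fin m → Fin m → Fin m → ℝ) :
    (∑ i, ∑ j, ∑ k, g i j k) = ∑ k, ∑ i, ∑ j, g i j k := by
  have h1 : (∑ i, ∑ j, ∑ k, g i j k) = ∑ i, ∑ k, ∑ j, g i j k :=
    Finset.sum_congr rfl fun i _ => Finset.sum_comm
  rw [h1]; exact Finset.sum_comm

lemma sum_rot2 (g : Fin m → Fin m → Fin m → ℝ) :
    (∑ i, ∑ j, ∑ k, g i j k) = ∑ j, ∑ k, ∑ i, g i j k :=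
  (sum_rot fun j k i => g i j k).symm

lemma fderiv_f_apply (x : E m) (e : {p : Fin m × Fin m // p.1 < p.2}) :
    fderiv ℝ (fun x : E m => (1 / (m:ℝ)) * ∑ i, ∑ j, ∑ k, symMat x i j * symMat x j k * symMat x k i)
      x (Pi.single e 1)
      = (6 / (m:ℝ)) * ∑ k, symMat x e.1.1 k * symMat x k e.1.2 := by
  rw [(hasFDerivAt_f x).fderiv]
  set A := symMat x with hA
  set p := e.1.1 with hp
  set q := e.1.2 with hq
  have happ : (∑ i, ∑ j, ∑ k,
      ((A i j * A j k) • symCLM k i +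
        A k i • (A i j • symCLM j k + A j k • symCLM i j)) : E m →L[ℝ] ℝ) (Pi.single e 1)
      = ∑ i, ∑ j, ∑ k, (A i j * A j k * symMat (Pi.single e 1) k i +
          (A k i * (A i j * symMat (Pi.single e 1) j k) +
            A k i * (A j k * symMat (Pi.single e 1) i j))) := by
    simp [ContinuousLinearMap.sum_apply, symCLM_apply, smul_eq_mul]
  rw [ContinuousLinearMap.smul_apply, happ, smul_eq_mul]
  set δ := symMat (Pi.single e 1) with hδ
  set S := ∑ k, A p k * A k q with hS
  have hsym : ∀ i j, A i j = A j i := fun i j => symMat_comm x i j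
  have T1 : (∑ i, ∑ j, ∑ k, A i j * A j k * δ k i) = 2 * S := by
    rw [sum_rot (fun i j k => A i j * A j k * δ k i)]
    have h1 : ∀ k i : Fin m, (∑ j, A i j * A j k * δ k i) = δ k i * ∑ j, A i j * A j k := by
      intro k i; rw [Finset.mul_sum]; exact Finset.sum_congr rfl fun j _ => by ring
    simp_rw [h1]
    rw [delta_sum e (fun k i => ∑ j, A i j * A j k)]
    have e1 : (∑ j, A q j * A j p) = S := Finset.sum_congr rfl fun j _ => by
      rw [hsym q j, hsym j p]; ring
    have e2 : (∑ j, A p j * A j q) = S := rfl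
    rw [e1, e2]; ring
  have T2 : (∑ i, ∑ j, ∑ k, A k i * (A i j * δ j k)) = 2 * S := by
    rw [sum_rot2 (fun i j k => A k i * (A i j * δ j k))]
    have h1 : ∀ j k : Fin m, (∑ i, A k i * (A i j * δ j k)) = δ j k * ∑ i, A k i * A i j := by
      intro j k; rw [Finset.mul_sum]; exact Finset.sum_congr rfl fun i _ => by ring
    simp_rw [h1]
    rw [delta_sum e (fun j k => ∑ i, A k i * A i j)]
    have e1 : (∑ i, A q i * A i p) = S := Finset.sum_congr rfl fun i _ => by
      rw [hsym q i, hsym i p]; ring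
    have e2 : (∑ i, A p i * A i q) = S := rfl
    rw [e1, e2]; ring
  have T3 : (∑ i, ∑ j, ∑ k, A k i * (A j k * δ i j)) = 2 * S := by
    have h1 : ∀ i j : Fin m, (∑ k, A k i * (A j k * δ i j)) = δ i j * ∑ k, A k i * A j k := by
      intro i j; rw [Finset.mul_sum]; exact Finset.sum_congr rfl fun k _ => by ring
    simp_rw [h1]
    rw [delta_sum e (fun i j => ∑ k, A k i * A j k)]
    have e1 : (∑ k, A k p * A q k) = S := Finset.sum_congr rfl fun k _ => by
      rw [hsym k p, hsym q k]
    have e2 : (∑ k, A k q * A p k) = S := Finset.sum_congr rfl fun k _ => by ring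
    rw [e1, e2]; ring
  have split : (∑ i, ∑ j, ∑ k, (A i j * A j k * δ k i +
          (A k i * (A i j * δ j k) + A k i * (A j k * δ i j))))
      = (∑ i, ∑ j, ∑ k, A i j * A j k * δ k i)
        + ((∑ i, ∑ j, ∑ k, A k i * (A i j * δ j k))
          + (∑ i, ∑ j, ∑ k, A k i * (A j k * δ i j))) := by
    simp [Finset.sum_add_distrib]
  rw [split, T1, T2, T3]; ring

lemma clm_apply (D : Matrix (Fin m) (Fin m) ℝ) (v : EuclideanSpace ℝ (Fin m)) (p : Fin m) :
    (Matrix.toEuclideanCLM (𝕜 := ℝ) D v) p = ∑ k, D p k * v k := rfl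

lemma norm_sq_eu (v : EuclideanSpace ℝ (Fin m)) : ‖v‖ ^ 2 = ∑ k, (v k) ^ 2 := by
  rw [EuclideanSpace.norm_eq, Real.sq_sqrt (by positivity)]
  simp [Real.norm_eq_abs, sq_abs]

lemma opbound (D : Matrix (Fin m) (Fin m) ℝ) (w : Fin m → ℝ) :
    ∑ p, (∑ k, D p k * w k) ^ 2
      ≤ ‖Matrix.toEuclideanCLM (𝕜 := ℝ) D‖ ^ 2 * ∑ k, (w k) ^ 2 := by
  set T := Matrix.toEuclideanCLM (𝕜 := ℝ) D with hT
  set v : EuclideanSpace ℝ (Fin m) := (WithLp.equiv 2 _).symm w with hv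
  have h1 : ‖T v‖ ≤ ‖T‖ * ‖v‖ := T.le_opNorm v
  have h2 : ‖T v‖ ^ 2 ≤ (‖T‖ * ‖v‖) ^ 2 := by
    nlinarith [norm_nonneg (T v), norm_nonneg v, norm_nonneg T]
  have h3 : ‖T v‖ ^ 2 = ∑ p, (∑ k, D p k * w k) ^ 2 := by
    rw [norm_sq_eu]
    refine Finset.sum_congr rfl fun p _ => ?_
    rw [clm_apply]
    rfl
  have h4 : ‖v‖ ^ 2 = ∑ k, (w k) ^ 2 := by rw [norm_sq_eu]; rfl
  calc ∑ p, (∑ k, D p k * w k) ^ 2 = ‖T v‖ ^ 2 := h3.symm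
    _ ≤ (‖T‖ * ‖v‖) ^ 2 := h2
    _ = ‖T‖ ^ 2 * ∑ k, (w k) ^ 2 := by rw [mul_pow, h4]

lemma opnorm_le (D : Matrix (Fin m) (Fin m) ℝ) (hD : ∀ i j, |D i j| ≤ 1) :
    ‖Matrix.toEuclideanCLM (𝕜 := ℝ) D‖ ≤ m := by
  refine ContinuousLinearMap.opNorm_le_bound _ (by positivity) fun v => ?_
  have key : ‖Matrix.toEuclideanCLM (𝕜 := ℝ) D v‖ ^ 2 ≤ ((m : ℝ) * ‖v‖) ^ 2 := by
    rw [norm_sq_eu]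
    have hrow : ∀ p, ((Matrix.toEuclideanCLM (𝕜 := ℝ) D v) p) ^ 2
        ≤ (m : ℝ) * ∑ k, (v k) ^ 2 := by
      intro p
      rw [clm_apply]
      calc (∑ k, D p k * v k) ^ 2 ≤ (∑ k, (D p k) ^ 2) * ∑ k, (v k) ^ 2 :=
            Finset.sum_mul_sq_le_sq_mul_sq _ _ _
        _ ≤ (m : ℝ) * ∑ k, (v k) ^ 2 := by
            refine mul_le_mul_of_nonneg_right ?_ (by positivity)
            calc (∑ k, (D p k) ^ 2) ≤ ∑ _k : Fin m, (1:ℝ) := by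
                  refine Finset.sum_le_sum fun k _ => ?_
                  have := hD p k
                  nlinarith [abs_nonneg (D p k), sq_abs (D p k)]
              _ = m := by simp
    calc (∑ p, ((Matrix.toEuclideanCLM (𝕜 := ℝ) D v) p) ^ 2)
        ≤ ∑ _p : Fin m, (m : ℝ) * ∑ k, (v k) ^ 2 := Finset.sum_le_sum fun p _ => hrow p
      _ = (m : ℝ) * ((m : ℝ) * ∑ k, (v k) ^ 2) := by rw [Finset.sum_const]; simp [mul_assoc]
      _ = ((m : ℝ) * ‖v‖) ^ 2 := by rw [mul_pow, ← norm_sq_eu]; ring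
  have h0 : (0:ℝ) ≤ (m : ℝ) * ‖v‖ := by positivity
  nlinarith [norm_nonneg (Matrix.toEuclideanCLM (𝕜 := ℝ) D v)]

lemma sum_pairs_le (F : Fin m → Fin m → ℝ) (hF : ∀ a b, 0 ≤ F a b) :
    (∑ e : {p : Fin m × Fin m // p.1 < p.2}, F e.1.1 e.1.2)
      ≤ ∑ a : Fin m, ∑ b : Fin m, F a b := by
  have h1 : (∑ a ∈ Finset.univ.filter (fun p : Fin m × Fin m => p.1 < p.2), F a.1 a.2)
      = ∑ e : {p : Fin m × Fin m // p.1 < p.2}, F e.1.1 e.1.2 :=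
    Finset.sum_subtype _ (by simp) _
  have h2 : (∑ a : Fin m × Fin m, F a.1 a.2) = ∑ a : Fin m, ∑ b : Fin m, F a b := by
    rw [Fintype.sum_prod_type]
  rw [← h1, ← h2]
  exact Finset.sum_le_sum_of_subset_of_nonneg (Finset.filter_subset _ _) fun i _ _ => hF _ _

end SGaux

set_option maxHeartbeats 1000000 in
theorem stmt_8 :
    ∃ C : ℝ, 0 < C ∧ ∀ (m : ℕ),
      let f : ({p : Fin m × Fin m // p.1 < p.2} → ℝ) → ℝ := fun x =>
        (1 / m) * ∑ i, ∑ j, ∑ k, symMat x i j * symMat x j k * symMat x k i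
      ∀ x y : {p : Fin m × Fin m // p.1 < p.2} → ℝ,
        (∀ e, x e ∈ Set.Icc (0 : ℝ) 1) → (∀ e, y e ∈ Set.Icc (0 : ℝ) 1) →
        ∑ e, (fderiv ℝ f x (Pi.single e 1) - fderiv ℝ f y (Pi.single e 1)) ^ 2
          ≤ C * m * ‖Matrix.toEuclideanCLM (𝕜 := ℝ) (symMat x - symMat y)‖ := by
  refine ⟨144, by norm_num, ?_⟩
  intro m f x y hx hy
  rcases Nat.eq_zero_or_pos m with hm | hm
  · subst hm
    haveI : IsEmpty {p : Fin 0 × Fin 0 // p.1 < p.2} := ⟨fun e => e.1.1.elim0⟩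
    rw [Finset.univ_eq_empty, Finset.sum_empty, Nat.cast_zero, mul_zero, zero_mul]
  have hm' : (0:ℝ) < m := by exact_mod_cast hm
  have hf : f = fun x => (1 / (m:ℝ)) *
      ∑ i, ∑ j, ∑ k, symMat x i j * symMat x j k * symMat x k i := rfl
  set A := symMat x with hA
  set B := symMat y with hB
  set N := ‖Matrix.toEuclideanCLM (𝕜 := ℝ) (symMat x - symMat y)‖ with hN
  have hNnn : 0 ≤ N := norm_nonneg _
  have hAm := SGaux.symMat_mem x hx
  have hBm := SGaux.symMat_mem y hy
  have hgx : ∀ e, fderiv ℝ f x (Pi.single e 1)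
      = (6 / (m:ℝ)) * ∑ k, A e.1.1 k * A k e.1.2 := fun e => by
    rw [hf]; exact SGaux.fderiv_f_apply x e
  have hgy : ∀ e, fderiv ℝ f y (Pi.single e 1)
      = (6 / (m:ℝ)) * ∑ k, B e.1.1 k * B k e.1.2 := fun e => by
    rw [hf]; exact SGaux.fderiv_f_apply y e
  -- difference matrix entries
  have hAsym : ∀ i j, A i j = A j i := fun i j => SGaux.symMat_comm x i j
  have hBsym : ∀ i j, B i j = B j i := fun i j => SGaux.symMat_comm y i j
  have hDsym : ∀ i j, A i j - B i j = A j i - B j i := fun i j => by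
    rw [hAsym i j, hBsym i j]
  -- operator bound per column
  have hop : ∀ w : Fin m → ℝ,
      (∑ p, (∑ k, (A p k - B p k) * w k) ^ 2) ≤ N ^ 2 * ∑ k, (w k) ^ 2 := by
    intro w
    have h := SGaux.opbound (symMat x - symMat y) w
    simp only [Matrix.sub_apply] at h
    rw [hN]
    exact h
  -- entry square bounds
  have hA1 : ∀ i j, (A i j) ^ 2 ≤ 1 := fun i j => by
    have := hAm i j; rw [Set.mem_Icc] at this; nlinarith [this.1, this.2]
  have hB1 : ∀ i j, (B i j) ^ 2 ≤ 1 := fun i j => by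
    have := hBm i j; rw [Set.mem_Icc] at this; nlinarith [this.1, this.2]
  -- bound ∑_k w_k^2 ≤ m for entries
  have hcol : ∀ (M : Matrix (Fin m) (Fin m) ℝ) (hM : ∀ i j, M i j ^ 2 ≤ 1) (b : Fin m),
      (∑ k, (M k b) ^ 2) ≤ (m:ℝ) := by
    intro M hM b
    calc (∑ k, (M k b) ^ 2) ≤ ∑ _k : Fin m, (1:ℝ) := Finset.sum_le_sum fun k _ => hM k b
      _ = m := by simp
  -- U part
  have hU : (∑ e : {p : Fin m × Fin m // p.1 < p.2},
        (∑ k, (A e.1.1 k - B e.1.1 k) * A k e.1.2) ^ 2) ≤ N ^ 2 * m ^ 2 := by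
    calc (∑ e : {p : Fin m × Fin m // p.1 < p.2},
          (∑ k, (A e.1.1 k - B e.1.1 k) * A k e.1.2) ^ 2)
        ≤ ∑ a : Fin m, ∑ b : Fin m, (∑ k, (A a k - B a k) * A k b) ^ 2 :=
          SGaux.sum_pairs_le (fun a b => (∑ k, (A a k - B a k) * A k b) ^ 2)
            (fun a b => sq_nonneg _)
      _ = ∑ b : Fin m, ∑ a : Fin m, (∑ k, (A a k - B a k) * A k b) ^ 2 := Finset.sum_comm
      _ ≤ ∑ b : Fin m, N ^ 2 * (m:ℝ) := by
          refine Finset.sum_le_sum fun b _ => ?_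
          calc (∑ a, (∑ k, (A a k - B a k) * A k b) ^ 2)
              ≤ N ^ 2 * ∑ k, (A k b) ^ 2 := hop _
            _ ≤ N ^ 2 * (m:ℝ) := by
                refine mul_le_mul_of_nonneg_left (hcol A hA1 b) (by positivity)
      _ = N ^ 2 * m ^ 2 := by rw [Finset.sum_const]; simp; ring
  -- V part
  have hV : (∑ e : {p : Fin m × Fin m // p.1 < p.2},
        (∑ k, B e.1.1 k * (A k e.1.2 - B k e.1.2)) ^ 2) ≤ N ^ 2 * m ^ 2 := by
    have hrw : ∀ a b : Fin m, (∑ k, B a k * (A k b - B k b))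
        = ∑ k, (A b k - B b k) * B k a := by
      intro a b
      refine Finset.sum_congr rfl fun k _ => ?_
      rw [hDsym k b, hBsym a k]
      ring
    calc (∑ e : {p : Fin m × Fin m // p.1 < p.2},
          (∑ k, B e.1.1 k * (A k e.1.2 - B k e.1.2)) ^ 2)
        ≤ ∑ a : Fin m, ∑ b : Fin m, (∑ k, B a k * (A k b - B k b)) ^ 2 :=
          SGaux.sum_pairs_le (fun a b => (∑ k, B a k * (A k b - B k b)) ^ 2)
            (fun a b => sq_nonneg _)
      _ = ∑ a : Fin m, ∑ b : Fin m, (∑ k, (A b k - B b k) * B k a) ^ 2 := by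
          refine Finset.sum_congr rfl fun a _ => Finset.sum_congr rfl fun b _ => ?_
          rw [hrw a b]
      _ ≤ ∑ a : Fin m, N ^ 2 * (m:ℝ) := by
          refine Finset.sum_le_sum fun a _ => ?_
          calc (∑ b, (∑ k, (A b k - B b k) * B k a) ^ 2)
              ≤ N ^ 2 * ∑ k, (B k a) ^ 2 := hop _
            _ ≤ N ^ 2 * (m:ℝ) := by
                refine mul_le_mul_of_nonneg_left (hcol B hB1 a) (by positivity)
      _ = N ^ 2 * m ^ 2 := by rw [Finset.sum_const]; simp; ring
  -- main chain
  have hmain : (∑ e : {p : Fin m × Fin m // p.1 < p.2},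
      (fderiv ℝ f x (Pi.single e 1) - fderiv ℝ f y (Pi.single e 1)) ^ 2)
      ≤ 144 * N ^ 2 := by
    have hterm : ∀ e : {p : Fin m × Fin m // p.1 < p.2},
        (fderiv ℝ f x (Pi.single e 1) - fderiv ℝ f y (Pi.single e 1)) ^ 2
        ≤ (36 / (m:ℝ)^2) * (2 * (∑ k, (A e.1.1 k - B e.1.1 k) * A k e.1.2) ^ 2
            + 2 * (∑ k, B e.1.1 k * (A k e.1.2 - B k e.1.2)) ^ 2) := by
      intro e
      rw [hgx e, hgy e]
      set U := ∑ k, (A e.1.1 k - B e.1.1 k) * A k e.1.2 with hUdef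
      set V := ∑ k, B e.1.1 k * (A k e.1.2 - B k e.1.2) with hVdef
      have hUV : (∑ k, A e.1.1 k * A k e.1.2) - (∑ k, B e.1.1 k * B k e.1.2) = U + V := by
        rw [hUdef, hVdef, ← Finset.sum_add_distrib, ← Finset.sum_sub_distrib]
        refine Finset.sum_congr rfl fun k _ => by ring
      have : (6 / (m:ℝ)) * (∑ k, A e.1.1 k * A k e.1.2)
          - (6 / (m:ℝ)) * (∑ k, B e.1.1 k * B k e.1.2)
          = (6 / (m:ℝ)) * (U + V) := by rw [← mul_sub, hUV]
      rw [this]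
      have h36 : (6 / (m:ℝ)) ^ 2 = 36 / (m:ℝ)^2 := by ring
      have hsq : ((6 / (m:ℝ)) * (U + V)) ^ 2 = (36 / (m:ℝ)^2) * (U + V)^2 := by
        rw [mul_pow, h36]
      rw [hsq]
      have h2uv : (U + V) ^ 2 ≤ 2 * U ^ 2 + 2 * V ^ 2 := by nlinarith [sq_nonneg (U - V)]
      exact mul_le_mul_of_nonneg_left h2uv (by positivity)
    calc (∑ e : {p : Fin m × Fin m // p.1 < p.2},
        (fderiv ℝ f x (Pi.single e 1) - fderiv ℝ f y (Pi.single e 1)) ^ 2)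
        ≤ ∑ e : {p : Fin m × Fin m // p.1 < p.2},
            (36 / (m:ℝ)^2) * (2 * (∑ k, (A e.1.1 k - B e.1.1 k) * A k e.1.2) ^ 2
              + 2 * (∑ k, B e.1.1 k * (A k e.1.2 - B k e.1.2)) ^ 2) :=
          Finset.sum_le_sum fun e _ => hterm e
      _ = (36 / (m:ℝ)^2) * (2 * (∑ e : {p : Fin m × Fin m // p.1 < p.2},
              (∑ k, (A e.1.1 k - B e.1.1 k) * A k e.1.2) ^ 2)
            + 2 * (∑ e : {p : Fin m × Fin m // p.1 < p.2},
              (∑ k, B e.1.1 k * (A k e.1.2 - B k e.1.2)) ^ 2)) := by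
          rw [← Finset.mul_sum, Finset.sum_add_distrib, ← Finset.mul_sum, ← Finset.mul_sum]
      _ ≤ (36 / (m:ℝ)^2) * (2 * (N ^ 2 * m ^ 2) + 2 * (N ^ 2 * m ^ 2)) := by
          refine mul_le_mul_of_nonneg_left ?_ (by positivity)
          have := hU; have := hV
          nlinarith
      _ = 144 * N ^ 2 := by field_simp; ring
  -- N ≤ m
  have hNm : N ≤ m := by
    refine SGaux.opnorm_le _ fun i j => ?_
    have h1 := hAm i j; have h2 := hBm i j
    rw [Set.mem_Icc] at h1 h2
    rw [Matrix.sub_apply]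
    rw [abs_le]
    constructor <;> [linarith [h1.1, h2.2]; linarith [h1.2, h2.1]]
  calc (∑ e : {p : Fin m × Fin m // p.1 < p.2},
      (fderiv ℝ f x (Pi.single e 1) - fderiv ℝ f y (Pi.single e 1)) ^ 2)
      ≤ 144 * N ^ 2 := hmain
    _ ≤ 144 * m * N := by nlinarith
end

section
/- Let $f : [0,1]^n \to \mathbb{R}$ be twice continuously differentiable with $\sup_x |\partial^2 f/\partial x_i^2| \leq c_{ii}$ for each $i$, and let $I(x) = \sum_{i=1}^n (x_i \log x_i + (1-x_i)\log(1-x_i))$. Then $\log \sum_{x \in \{0,1\}^n} e^{f(x)} \geq \sup_{x \in [0,1]^n}(f(x) - I(x)) - \frac{1}{2}\sum_{i=1}^n c_{ii}$. -/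
open Real MeasureTheory

-- key combinatorial lemma
lemma keyM {n : ℕ} (w : Fin n → Bool → ℝ) (k : Fin n) (hw : w k true + w k false = 1)
    (F : (Fin n → Bool) → ℝ) :
    ∑ y : Fin n → Bool, (∏ j, w j (y j)) * F y
      = ∑ y : Fin n → Bool, (∏ j, w j (y j)) *
          (w k true * F (Function.update y k true)
            + w k false * F (Function.update y k false)) := by
  rw [← sub_eq_zero, ← Finset.sum_sub_distrib]
  apply Finset.sum_ninvolution (fun y => Function.update y k (!(y k)))
  · intro y
    have hQ : ∀ z : Fin n → Bool, (∏ j, w j (z j))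
        = w k (z k) * ∏ j ∈ Finset.univ.erase k, w j (z j) :=
      fun z => (Finset.mul_prod_erase Finset.univ _ (Finset.mem_univ k)).symm
    have hR : ∀ b, (∏ j ∈ Finset.univ.erase k, w j ((Function.update y k b) j))
        = ∏ j ∈ Finset.univ.erase k, w j (y j) := by
      intro b
      exact Finset.prod_congr rfl fun j hj =>
        by rw [Function.update_of_ne (Finset.ne_of_mem_erase hj)]
    have hupd : ∀ b b', Function.update (Function.update y k b) k b' = Function.update y k b' :=
      fun b b' => Function.update_idem ..
    rw [hQ y, hQ (Function.update y k (!(y k))), hR, hupd, hupd, Function.update_self]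
    have hw' : w k false = 1 - w k true := by linarith
    cases hb : y k
    · have h1 : Function.update y k false = y := by rw [← hb]; exact Function.update_eq_self ..
      simp only [Bool.not_false]; rw [h1, hw']; ring
    · have h1 : Function.update y k true = y := by rw [← hb]; exact Function.update_eq_self ..
      simp only [Bool.not_true]; rw [h1, hw']; ring
  · intro y _ h
    have := congrFun h k
    simp at this
  · intro y; exact Finset.mem_univ _
  · intro y
    funext j
    by_cases hj : j = k
    · subst hj; simp
    · simp [Function.update_of_ne hj]

lemma sumQ {n : ℕ} (w : Fin n → Bool → ℝ) (hw : ∀ j, w j true + w j false = 1) :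
    ∑ y : Fin n → Bool, (∏ j, w j (y j)) = 1 := by
  rw [← Fintype.prod_sum]
  rw [Finset.prod_eq_one]
  intro j _
  rw [Fintype.sum_bool]
  exact hw j

lemma gibbs {α : Type*} [Fintype α] [DecidableEq α] (q F : α → ℝ)
    (hq0 : ∀ y, 0 ≤ q y) (hq1 : ∑ y, q y = 1) :
    ∑ y, q y * F y - ∑ y, q y * Real.log (q y) ≤ Real.log (∑ y, Real.exp (F y)) := by
  classical
  set T : Finset α := Finset.univ.filter (fun y => q y ≠ 0) with hT
  have hsubT : ∀ (G : α → ℝ), (∀ y, q y = 0 → G y = 0) → ∑ y ∈ T, G y = ∑ y, G y := by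
    intro G hG
    apply Finset.sum_filter_of_ne
    intro y _ hGy
    intro hqy
    exact hGy (hG y hqy)
  have hTq : ∑ y ∈ T, q y = 1 := by
    rw [hsubT q (fun y h => h)]; exact hq1
  have hTpos : ∀ y ∈ T, 0 < q y := by
    intro y hy
    rcases (Finset.mem_filter.mp hy) with ⟨-, h⟩
    exact lt_of_le_of_ne (hq0 y) (Ne.symm h)
  have hTne : T.Nonempty := by
    by_contra h
    rw [Finset.not_nonempty_iff_eq_empty] at h
    rw [h, Finset.sum_empty] at hTq
    norm_num at hTq
  have jensen := (strictConcaveOn_log_Ioi.concaveOn).le_map_sum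
    (t := T) (w := q) (p := fun y => Real.exp (F y) / q y)
    (fun y hy => hq0 y) hTq
    (fun y hy => Set.mem_Ioi.mpr (div_pos (Real.exp_pos _) (hTpos y hy)))
  have hpt : ∀ y ∈ T, q y • (Real.exp (F y) / q y) = Real.exp (F y) := by
    intro y hy
    rw [smul_eq_mul, mul_div_cancel₀ _ (hTpos y hy).ne']
  rw [Finset.sum_congr rfl hpt] at jensen
  have hlog : ∀ y ∈ T, q y • Real.log (Real.exp (F y) / q y)
      = q y * F y - q y * Real.log (q y) := by
    intro y hy
    rw [smul_eq_mul, Real.log_div (Real.exp_ne_zero _) (hTpos y hy).ne', Real.log_exp, mul_sub]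
  rw [Finset.sum_congr rfl hlog, Finset.sum_sub_distrib] at jensen
  rw [hsubT (fun y => q y * F y) (fun y h => by show q y * _ = 0; rw [h, zero_mul]),
    hsubT (fun y => q y * Real.log (q y)) (fun y h => by show q y * _ = 0; rw [h, zero_mul])] at jensen
  refine le_trans jensen (Real.log_le_log ?_ ?_)
  · exact Finset.sum_pos (fun y _ => Real.exp_pos _) hTne
  · exact Finset.sum_le_sum_of_subset_of_nonneg (Finset.filter_subset _ _)
      (fun y _ _ => (Real.exp_pos _).le)

lemma uds {n : ℕ} : UniqueDiffOn ℝ (Set.Icc (0 : Fin n → ℝ) 1) := by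
  rw [← Set.pi_univ_Icc]
  exact UniqueDiffOn.pi (fun i _ => by
    simpa using uniqueDiffOn_Icc (show (0:ℝ) < 1 by norm_num))

lemma onedim {n : ℕ} {f : (Fin n → ℝ) → ℝ}
    (hf : ContDiffOn ℝ 2 f (Set.Icc (0 : Fin n → ℝ) 1))
    {ci : ℝ} (i : Fin n)
    (hci : ∀ z ∈ Set.Icc (0 : Fin n → ℝ) 1,
      |fderivWithin ℝ (fderivWithin ℝ f (Set.Icc (0 : Fin n → ℝ) 1))
        (Set.Icc (0 : Fin n → ℝ) 1) z (Pi.single i 1) (Pi.single i 1)| ≤ ci)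
    {z : Fin n → ℝ} (hz : z ∈ Set.Icc (0 : Fin n → ℝ) 1)
    {a : ℝ} (ha : a ∈ Set.Icc (0:ℝ) 1) :
    f (Function.update z i a) - ci / 2
      ≤ a * f (Function.update z i 1) + (1 - a) * f (Function.update z i 0) := by
  set S := Set.Icc (0 : Fin n → ℝ) 1 with hS
  have hciN : 0 ≤ ci := le_trans (abs_nonneg _) (hci z hz)
  set e : Fin n → ℝ := Pi.single i 1 with he
  set u : ℝ → (Fin n → ℝ) := fun t => Function.update z i t with hu
  have hueq : u = fun t => Function.update z i 0 + t • e := by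
    funext t j
    by_cases hj : j = i
    · subst hj; simp [hu, he]
    · simp [hu, he, Function.update_of_ne hj, Pi.single_eq_of_ne hj]
  have hud : ∀ t : ℝ, HasDerivAt u e t := by
    intro t
    rw [hueq]
    simpa using ((hasDerivAt_id t).smul_const e).const_add (Function.update z i 0)
  have hmap : Set.MapsTo u (Set.Icc (0:ℝ) 1) S := by
    intro t ht
    constructor
    · intro j
      by_cases hj : j = i
      · subst hj; simpa [hu] using ht.1
      · simpa [hu, Function.update_of_ne hj] using hz.1 j
    · intro j
      by_cases hj : j = i
      · subst hj; simpa [hu] using ht.2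
      · simpa [hu, Function.update_of_ne hj] using hz.2 j
  set g : ℝ → ℝ := fun t => f (u t) with hg
  set G₁ : ℝ → ℝ := fun t => fderivWithin ℝ f S (u t) e with hG₁
  set G₂ : ℝ → ℝ := fun t => fderivWithin ℝ (fderivWithin ℝ f S) S (u t) e e with hG₂
  have hdf : DifferentiableOn ℝ f S := hf.differentiableOn two_ne_zero
  have hdf' : DifferentiableOn ℝ (fderivWithin ℝ f S) S :=
    (hf.fderivWithin uds (m := 1) (by norm_num)).differentiableOn one_ne_zero
  have hg' : ∀ t ∈ Set.Icc (0:ℝ) 1, HasDerivWithinAt g (G₁ t) (Set.Icc (0:ℝ) 1) t := by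
    intro t ht
    exact (hdf (u t) (hmap ht)).hasFDerivWithinAt.comp_hasDerivWithinAt t
      (hud t).hasDerivWithinAt hmap
  have hG₁' : ∀ t ∈ Set.Icc (0:ℝ) 1, HasDerivWithinAt G₁ (G₂ t) (Set.Icc (0:ℝ) 1) t := by
    intro t ht
    have h1 : HasDerivWithinAt (fun s => fderivWithin ℝ f S (u s))
        (fderivWithin ℝ (fderivWithin ℝ f S) S (u t) e) (Set.Icc (0:ℝ) 1) t :=
      (hdf' (u t) (hmap ht)).hasFDerivWithinAt.comp_hasDerivWithinAt t
        (hud t).hasDerivWithinAt hmap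
    have h2 := h1.clm_apply (hasDerivWithinAt_const t _ e)
    simpa using h2
  have hgc : ContinuousOn g (Set.Icc (0:ℝ) 1) :=
    hf.continuousOn.comp (fun t _ => (hud t).continuousAt.continuousWithinAt) hmap
  -- the auxiliary concave function
  set k : ℝ → ℝ := fun t => t * g 1 + (1 - t) * g 0 - g t + ci / 2 * (t * (1 - t)) with hk
  set k' : ℝ → ℝ := fun t => g 1 - g 0 - G₁ t + ci / 2 * (1 - 2 * t) with hk'
  have hconc : ConcaveOn ℝ (Set.Icc (0:ℝ) 1) k := by
    apply concaveOn_of_hasDerivWithinAt2_nonpos (convex_Icc 0 1) (f' := k')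
      (f'' := fun t => -G₂ t - ci)
    · -- continuity
      apply ContinuousOn.add
      · apply ContinuousOn.sub
        · exact (continuousOn_id.mul continuousOn_const).add
            ((continuousOn_const.sub continuousOn_id).mul continuousOn_const)
        · exact hgc
      · exact continuousOn_const.mul (continuousOn_id.mul
          (continuousOn_const.sub continuousOn_id))
    · intro t ht
      rw [interior_Icc] at ht
      have h0 : HasDerivWithinAt k
          (1 * g 1 + (0 - 1) * g 0 - G₁ t + ci / 2 * (1 * (1 - t) + t * (0 - 1)))
          (Set.Ioo (0:ℝ) 1) t := by
        refine HasDerivWithinAt.add (HasDerivWithinAt.sub ?_ ?_) ?_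
        · exact ((hasDerivWithinAt_id t _).mul_const (g 1)).add
            (((hasDerivWithinAt_const t _ (1:ℝ)).sub (hasDerivWithinAt_id t _)).mul_const (g 0))
        · exact (hg' t (Set.Ioo_subset_Icc_self ht)).mono Set.Ioo_subset_Icc_self
        · exact ((hasDerivWithinAt_id t _).mul
            ((hasDerivWithinAt_const t _ (1:ℝ)).sub (hasDerivWithinAt_id t _))).const_mul (ci/2)
      have : (1 * g 1 + (0 - 1) * g 0 - G₁ t + ci / 2 * (1 * (1 - t) + t * (0 - 1))) = k' t := by
        rw [hk']; ring
      rw [this] at h0; rwa [interior_Icc]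
    · intro t ht
      rw [interior_Icc] at ht
      have h0 : HasDerivWithinAt k' ((0 - G₂ t) + ci / 2 * (0 - 2 * 1)) (Set.Ioo (0:ℝ) 1) t := by
        refine HasDerivWithinAt.add ?_ ?_
        · exact (hasDerivWithinAt_const t _ (g 1 - g 0)).sub
            ((hG₁' t (Set.Ioo_subset_Icc_self ht)).mono Set.Ioo_subset_Icc_self)
        · exact ((hasDerivWithinAt_const t _ (1:ℝ)).sub
            ((hasDerivWithinAt_id t _).const_mul 2)).const_mul (ci/2)
      have : ((0 - G₂ t) + ci / 2 * (0 - 2 * 1)) = -G₂ t - ci := by ring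
      rw [this] at h0; rwa [interior_Icc]
    · intro t ht
      rw [interior_Icc] at ht
      have := hci (u t) (hmap (Set.Ioo_subset_Icc_self ht))
      have habs : |G₂ t| ≤ ci := this
      have := neg_le_of_abs_le habs
      linarith
  have h10 : k 1 = 0 := by simp [hk]
  have h00 : k 0 = 0 := by simp [hk]
  have key := hconc.2 (Set.mem_Icc.mpr ⟨zero_le_one, le_refl 1⟩)
    (Set.mem_Icc.mpr ⟨le_refl 0, zero_le_one⟩) ha.1 (by linarith [ha.2] : (0:ℝ) ≤ 1 - a)
    (by ring)
  rw [h10, h00] at key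
  simp only [smul_eq_mul, mul_zero, add_zero, mul_one] at key
  have hk_a : 0 ≤ k a := by simpa using key
  have haa : a * (1 - a) ≤ 1 := by nlinarith [ha.1, ha.2]
  have : g a = f (Function.update z i a) := rfl
  have h1' : g 1 = f (Function.update z i 1) := rfl
  have h0' : g 0 = f (Function.update z i 0) := rfl
  rw [hk] at hk_a
  simp only at hk_a
  rw [← this, ← h1', ← h0']
  nlinarith [hk_a, mul_le_mul_of_nonneg_left haa (by linarith : (0:ℝ) ≤ ci/2)]
theorem stmt_11 (n : ℕ) (f : (Fin n → ℝ) → ℝ)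
    (hf : ContDiffOn ℝ 2 f (Set.Icc (0 : Fin n → ℝ) 1))
    (c : Fin n → ℝ)
    (hc : ∀ x ∈ Set.Icc (0 : Fin n → ℝ) 1, ∀ i,
      |iteratedFDerivWithin ℝ 2 f (Set.Icc (0 : Fin n → ℝ) 1) x
        ![Pi.single i 1, Pi.single i 1]| ≤ c i) :
    Real.log (∑ x : Fin n → Bool, Real.exp (f (fun i => if x i then 1 else 0)))
      ≥ sSup ((fun x : Fin n → ℝ =>
          f x - ∑ i, (x i * Real.log (x i) + (1 - x i) * Real.log (1 - x i))) ''
          Set.Icc (0 : Fin n → ℝ) 1)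
        - (1 / 2) * ∑ i, c i := by
  classical
  set S := Set.Icc (0 : Fin n → ℝ) 1 with hSdef
  have hc2 : ∀ (i : Fin n), ∀ z ∈ S, |fderivWithin ℝ (fderivWithin ℝ f S) S z
      (Pi.single i 1) (Pi.single i 1)| ≤ c i := by
    intro i z hzS
    have h := hc z hzS i
    rwa [iteratedFDerivWithin_two_apply f uds hzS, Matrix.cons_val_zero,
      Matrix.cons_val_one, Matrix.cons_val_zero] at h
  rw [ge_iff_le, sub_le_iff_le_add]
  apply csSup_le
  · exact ⟨_, Set.mem_image_of_mem _ (Set.mem_Icc.mpr ⟨le_rfl, zero_le_one⟩)⟩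
  rintro r ⟨x, hx, rfl⟩
  have hx0 : ∀ j, 0 ≤ x j := fun j => (Pi.le_def.mp hx.1) j
  have hx1 : ∀ j, x j ≤ 1 := fun j => by
    have := (Pi.le_def.mp hx.2) j; simpa using this
  set w : Fin n → Bool → ℝ := fun j b => if b then x j else 1 - x j with hwdef
  have hw1 : ∀ j, w j true + w j false = 1 := fun j => by simp [hwdef]
  set Q : (Fin n → Bool) → ℝ := fun y => ∏ j, w j (y j) with hQdef
  have hQ0 : ∀ y, 0 ≤ Q y := by
    intro y
    apply Finset.prod_nonneg
    intro j _
    cases hb : y j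
    · have hwv : w j false = 1 - x j := by simp [hwdef]
      rw [hwv]; linarith [hx1 j]
    · have hwv : w j true = x j := by simp [hwdef]
      rw [hwv]; exact hx0 j
  have hQ1 : ∑ y : Fin n → Bool, Q y = 1 := sumQ w hw1
  -- marginal lemma
  have marg : ∀ (kk : Fin n) (H : Bool → ℝ),
      ∑ y : Fin n → Bool, Q y * H (y kk) = w kk true * H true + w kk false * H false := by
    intro kk H
    rw [show (∑ y : Fin n → Bool, Q y * H (y kk)) =
        ∑ y : Fin n → Bool, (∏ j, w j (y j)) * (fun y' : Fin n → Bool => H (y' kk)) y from rfl,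
      keyM w kk (hw1 kk)]
    have heach : ∀ y : Fin n → Bool,
        (∏ j, w j (y j)) * (w kk true * H ((Function.update y kk true) kk)
          + w kk false * H ((Function.update y kk false) kk))
        = Q y * (w kk true * H true + w kk false * H false) := by
      intro y; rw [Function.update_self, Function.update_self]
    rw [Finset.sum_congr rfl (fun y _ => heach y), ← Finset.sum_mul, hQ1, one_mul]
  -- entropy identity
  have hent : ∑ y : Fin n → Bool, Q y * Real.log (Q y)
      = ∑ i, (x i * Real.log (x i) + (1 - x i) * Real.log (1 - x i)) := by
    have step1 : ∀ y : Fin n → Bool, Q y * Real.log (Q y)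
        = ∑ j, Q y * Real.log (w j (y j)) := by
      intro y
      rw [← Finset.mul_sum]
      by_cases hq : Q y = 0
      · rw [hq, zero_mul, zero_mul]
      · have hne : ∀ j ∈ Finset.univ, w j (y j) ≠ 0 := by
          intro j _
          exact fun h => hq (Finset.prod_eq_zero (Finset.mem_univ j) h)
        rw [hQdef]
        simp only
        rw [Real.log_prod hne]
    rw [Finset.sum_congr rfl (fun y _ => step1 y), Finset.sum_comm]
    apply Finset.sum_congr rfl
    intro j _
    rw [marg j (fun b => Real.log (w j b))]
    simp [hwdef]
  -- the one dimensional inequality, applied through telescoping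
  set hpt : ℕ → (Fin n → Bool) → (Fin n → ℝ) :=
    fun m y j => if (j : ℕ) < m then (if y j then 1 else 0) else x j with hptdef
  have hptS : ∀ m y, hpt m y ∈ S := by
    intro m y
    constructor <;> intro j
    · by_cases hj : (j : ℕ) < m <;> cases hb : y j <;>
        simp [hptdef, hj, hb, hx0 j]
    · by_cases hj : (j : ℕ) < m <;> cases hb : y j <;>
        simp [hptdef, hj, hb, hx1 j]
  have step : ∀ (m : ℕ) (hm : m < n),
      (∑ y : Fin n → Bool, Q y * f (hpt m y)) - c ⟨m, hm⟩ / 2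
        ≤ ∑ y : Fin n → Bool, Q y * f (hpt (m+1) y) := by
    intro m hm
    set κ : Fin n := ⟨m, hm⟩ with hκ
    have hupdate : ∀ (y : Fin n → Bool) (b : Bool), hpt (m+1) (Function.update y κ b)
        = Function.update (hpt m y) κ (if b then (1:ℝ) else 0) := by
      intro y b
      funext j
      by_cases hj : j = κ
      · subst hj
        simp [hptdef, hκ]
      · have hjk : (j : ℕ) ≠ m := fun hcontr => hj (Fin.ext (by simp [hκ, hcontr]))
        rw [hptdef]
        simp only [Function.update_of_ne hj]
        by_cases hlt : (j : ℕ) < m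
        · rw [if_pos hlt, if_pos (Nat.lt_succ_of_lt hlt)]
        · rw [if_neg hlt, if_neg (by omega)]
    have hfix : ∀ y : Fin n → Bool, Function.update (hpt m y) κ (x κ) = hpt m y := by
      intro y
      have hval : hpt m y κ = x κ := by simp [hptdef, hκ]
      rw [← hval]
      exact Function.update_eq_self _ _
    have hpoint : ∀ y : Fin n → Bool,
        Q y * (f (hpt m y) - c κ / 2)
          ≤ Q y * (w κ true * (fun y' => f (hpt (m+1) y')) (Function.update y κ true)
            + w κ false * (fun y' => f (hpt (m+1) y')) (Function.update y κ false)) := by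
      intro y
      apply mul_le_mul_of_nonneg_left _ (hQ0 y)
      simp only
      rw [hupdate y true, hupdate y false]
      have hone := onedim hf κ (hc2 κ) (hptS m y) (Set.mem_Icc.mpr ⟨hx0 κ, hx1 κ⟩)
      rw [hfix y] at hone
      simpa [hwdef] using hone
    have hL : ∑ y : Fin n → Bool, Q y * (f (hpt m y) - c κ / 2)
        = (∑ y : Fin n → Bool, Q y * f (hpt m y)) - c κ / 2 := by
      have : ∀ y : Fin n → Bool, Q y * (f (hpt m y) - c κ / 2)
          = Q y * f (hpt m y) - Q y * (c κ / 2) := fun y => mul_sub _ _ _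
      rw [Finset.sum_congr rfl (fun y _ => this y), Finset.sum_sub_distrib,
        ← Finset.sum_mul, hQ1, one_mul]
    have hkey := keyM w κ (hw1 κ) (fun y' => f (hpt (m+1) y'))
    calc (∑ y : Fin n → Bool, Q y * f (hpt m y)) - c κ / 2
        = ∑ y : Fin n → Bool, Q y * (f (hpt m y) - c κ / 2) := hL.symm
      _ ≤ ∑ y : Fin n → Bool, Q y *
            (w κ true * (fun y' => f (hpt (m+1) y')) (Function.update y κ true)
              + w κ false * (fun y' => f (hpt (m+1) y')) (Function.update y κ false)) :=
          Finset.sum_le_sum (fun y _ => hpoint y)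
      _ = ∑ y : Fin n → Bool, Q y * f (hpt (m+1) y) := hkey.symm
  have tel : ∀ m, m ≤ n →
      f x - (∑ i ∈ Finset.range m, (if hm : i < n then c ⟨i, hm⟩ else 0)) / 2
        ≤ ∑ y : Fin n → Bool, Q y * f (hpt m y) := by
    intro m
    induction m with
    | zero =>
      intro _
      have hz : ∀ y : Fin n → Bool, hpt 0 y = x := by
        intro y; funext j; simp [hptdef]
      have hzz : ∑ y : Fin n → Bool, Q y * f (hpt 0 y) = ∑ y : Fin n → Bool, Q y * f x :=
        Finset.sum_congr rfl (fun y _ => by rw [hz y])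
      rw [hzz, ← Finset.sum_mul, hQ1, one_mul]
      simp
    | succ m ih =>
      intro hm1
      have hmn : m < n := hm1
      have h1 := ih (le_of_lt hmn)
      have h2 := step m hmn
      rw [Finset.sum_range_succ, dif_pos hmn]
      linarith
  have htel := tel n le_rfl
  have hrange : (∑ i ∈ Finset.range n, (if hm : i < n then c ⟨i, hm⟩ else 0)) = ∑ i, c i := by
    rw [← Fin.sum_univ_eq_sum_range]
    apply Finset.sum_congr rfl
    intro i _
    rw [dif_pos i.isLt]
  have hptn : ∀ y : Fin n → Bool, hpt n y = fun j => if y j then 1 else 0 := by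
    intro y; funext j; simp [hptdef, j.isLt]
  have hA : ∑ y : Fin n → Bool, Q y * f (hpt n y)
      = ∑ y : Fin n → Bool, Q y * f (fun j => if y j then 1 else 0) :=
    Finset.sum_congr rfl (fun y _ => by rw [hptn y])
  rw [hrange, hA] at htel
  have hg := gibbs Q (fun y : Fin n → Bool => f (fun j => if y j then 1 else 0)) hQ0 hQ1
  rw [hent] at hg
  linarith
end
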